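/- Let (X,d) be an ultrametric space (with d ≤ 1) and let Y be a separable metrizable space. A function f : X → Y is of Baire class 1 if and only if f is the pointwise limit of a sequence of full functions from X to Y. -/
import Mathlib

open Set Filter Topology Metric

/-- A set is `Fσ` (i.e. `Σ⁰₂`): a countable union of closed sets. -/
def IsFsigma {X : Type*} [TopologicalSpace X] (A : Set X) : Prop :=
  ∃ F : ℕ → Set X, (∀ n, IsClosed (F n)) ∧ A = ⋃ n, F n

/-- A subset of a metric space is full: for some constant `r > 0`, together with
each of its points it contains the open ball of radius `r` around it. -/
def IsFullSet {X : Type*} [MetricSpace X] (A : Set X) : Prop :=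
  ∃ r : ℝ, 0 < r ∧ ∀ x ∈ A, Metric.ball x r ⊆ A

/-- A function is full: it has finitely many values and the preimage of each
value is a full set. -/
def IsFullFun {X Y : Type*} [MetricSpace X] (f : X → Y) : Prop :=
  (Set.range f).Finite ∧ ∀ y ∈ Set.range f, IsFullSet (f ⁻¹' {y})

set_option linter.unusedSectionVars false
set_option maxHeartbeats 1000000

section Easy

variable {X : Type*} [MetricSpace X]

lemma isOpen_preimage_of_full {Y : Type*} {g : X → Y}
    (hg : ∀ y ∈ Set.range g, IsFullSet (g ⁻¹' {y})) (T : Set Y) :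
    IsOpen (g ⁻¹' T) := by
  rw [Metric.isOpen_iff]
  intro x hx
  obtain ⟨r, hr, hball⟩ := hg (g x) ⟨x, rfl⟩
  exact ⟨r, hr, (hball x rfl).trans (fun z hz => by
    simp only [mem_preimage, mem_singleton_iff] at hz
    simpa [Set.mem_preimage, hz] using hx)⟩

lemma isClosed_preimage_of_full {Y : Type*} {g : X → Y}
    (hg : ∀ y ∈ Set.range g, IsFullSet (g ⁻¹' {y})) (T : Set Y) :
    IsClosed (g ⁻¹' T) := by
  rw [← isOpen_compl_iff, ← Set.preimage_compl]
  exact isOpen_preimage_of_full hg Tᶜ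

lemma baire_one_of_limit {Y : Type*} [MetricSpace Y] {f : X → Y} {g : ℕ → X → Y}
    (hfull : ∀ n, IsFullFun (g n))
    (hlim : ∀ x, Tendsto (fun n => g n x) atTop (𝓝 (f x)))
    (U : Set Y) (hU : IsOpen U) : IsFsigma (f ⁻¹' U) := by
  rcases eq_empty_or_nonempty Uᶜ with hUc | hUc
  · have hUuniv : U = univ := compl_empty_iff.mp hUc
    exact ⟨fun _ => univ, fun _ => isClosed_univ, by simp [hUuniv, Set.iUnion_const]⟩
  let e : ℕ ≃ ℕ × ℕ := (Denumerable.eqv (ℕ × ℕ)).symm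
  let C : ℕ → Set Y := fun m => {y | (1/2 : ℝ)^m ≤ infDist y Uᶜ}
  refine ⟨fun i => ⋂ n ∈ Set.Ici (e i).2, (g n) ⁻¹' (C (e i).1), ?_, ?_⟩
  · intro i
    exact isClosed_biInter fun n _ => isClosed_preimage_of_full (hfull n).2 _
  · ext x
    simp only [mem_preimage, mem_iUnion, mem_iInter, Set.mem_Ici]
    constructor
    · intro hx
      have hpos : 0 < infDist (f x) Uᶜ :=
        (hU.isClosed_compl.notMem_iff_infDist_pos hUc).mp (by simpa using hx)
      obtain ⟨m, hm⟩ := exists_pow_lt_of_lt_one (half_pos hpos) (by norm_num : (1/2:ℝ) < 1)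
      obtain ⟨N, hN⟩ := Metric.tendsto_atTop.mp (hlim x) ((1/2:ℝ)^m) (by positivity)
      refine ⟨e.symm (m, N), ?_⟩
      rw [Equiv.apply_symm_apply]
      intro n hn
      have h1 : infDist (f x) Uᶜ ≤ infDist (g n x) Uᶜ + dist (f x) (g n x) :=
        infDist_le_infDist_add_dist
      have h2 : dist (f x) (g n x) < (1/2:ℝ)^m := by
        rw [dist_comm]; exact hN n hn
      have : (1/2:ℝ)^m ≤ infDist (g n x) Uᶜ := by
        have : 2 * (1/2:ℝ)^m < infDist (f x) Uᶜ := by linarith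
        linarith
      exact this
    · rintro ⟨i, hi⟩
      set m := (e i).1
      set N := (e i).2
      have htend : Tendsto (fun n => infDist (g n x) Uᶜ) atTop (𝓝 (infDist (f x) Uᶜ)) :=
        ((continuous_infDist_pt Uᶜ).continuousAt.tendsto.comp (hlim x))
      have hge : (1/2:ℝ)^m ≤ infDist (f x) Uᶜ :=
        ge_of_tendsto htend (eventually_atTop.mpr ⟨N, fun n hn => hi n hn⟩)
      have : f x ∉ Uᶜ :=
        (hU.isClosed_compl.notMem_iff_infDist_pos hUc).mpr
          (lt_of_lt_of_le (by positivity) hge)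
      simpa using this

end Easy

section Fsigma
variable {X : Type*} [MetricSpace X]

lemma exists_closed_monotone_of_isOpen (U : Set X) (hU : IsOpen U) :
    ∃ F : ℕ → Set X, (∀ n, IsClosed (F n)) ∧ Monotone F ∧ (⋃ n, F n) = U := by
  rcases eq_empty_or_nonempty Uᶜ with hUc | hUc
  · exact ⟨fun _ => univ, fun _ => isClosed_univ,
      monotone_const, by simp [Set.iUnion_const, (compl_empty_iff.mp hUc)]⟩
  refine ⟨fun j => {x | (1/2:ℝ)^j ≤ infDist x Uᶜ}, ?_, ?_, ?_⟩
  · exact fun j => isClosed_le continuous_const (continuous_infDist_pt Uᶜ)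
  · intro a b hab x hx
    simp only [mem_setOf_eq] at *
    exact le_trans (pow_le_pow_of_le_one (by norm_num) (by norm_num) hab) hx
  · ext x
    simp only [mem_iUnion, mem_setOf_eq]
    constructor
    · rintro ⟨j, hj⟩
      have : x ∉ Uᶜ := (hU.isClosed_compl.notMem_iff_infDist_pos hUc).mpr
        (lt_of_lt_of_le (by positivity) hj)
      simpa using this
    · intro hx
      have hpos : 0 < infDist x Uᶜ :=
        (hU.isClosed_compl.notMem_iff_infDist_pos hUc).mp (by simpa using hx)
      obtain ⟨j, hj⟩ := exists_pow_lt_of_lt_one hpos (by norm_num : (1/2:ℝ) < 1)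
      exact ⟨j, hj.le⟩

lemma fsigma_structured (A : Set X) (K O : ℕ → Set X) (hK : ∀ i, IsClosed (K i))
    (hO : ∀ i, IsOpen (O i)) (hA : A = ⋃ i, K i ∩ O i) :
    ∃ F : ℕ → Set X, (∀ n, IsClosed (F n)) ∧ Monotone F ∧ (⋃ n, F n) = A := by
  choose W hWcl hWmono hWun using fun i => exists_closed_monotone_of_isOpen (O i) (hO i)
  refine ⟨fun n => ⋃ i ∈ Finset.range (n+1), K i ∩ W i n, ?_, ?_, ?_⟩
  · intro n
    exact (Finset.range (n+1)).finite_toSet.isClosed_biUnion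
      (fun i _ => (hK i).inter (hWcl i n))
  · intro a b hab x hx
    simp only [mem_iUnion, Finset.mem_coe, Finset.mem_range] at *
    obtain ⟨i, hi, hxi⟩ := hx
    exact ⟨i, lt_of_lt_of_le hi (by omega), hxi.1, hWmono i (by omega : a ≤ b) hxi.2⟩
  · ext x
    simp only [mem_iUnion, Finset.mem_range, hA]
    constructor
    · rintro ⟨n, i, hi, hxK, hxW⟩
      exact ⟨i, hxK, (hWun i) ▸ mem_iUnion.mpr ⟨n, hxW⟩⟩
    · rintro ⟨i, hxK, hxO⟩
      rw [← hWun i] at hxO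
      obtain ⟨j, hj⟩ := mem_iUnion.mp hxO
      exact ⟨max i j, i, by omega, hxK, hWmono i (le_max_right i j) hj⟩

lemma ultra_ball_eq (hultra : ∀ x y z : X, dist x z ≤ max (dist x y) (dist y z))
    {x y : X} {r : ℝ} (h : dist x y < r) : ball x r = ball y r := by
  have key : ∀ a b : X, dist a b < r → ball b r ⊆ ball a r := by
    intro a b hab z hz
    rw [mem_ball'] at hz ⊢
    exact lt_of_le_of_lt (hultra a b z) (max_lt hab hz)
  exact Subset.antisymm (key y x (by rwa [dist_comm])) (key x y h)

end Fsigma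

section Sel
variable {X : Type*} [MetricSpace X]

def fullQ (Ct Et : List ℕ → ℕ → Set X) (n : ℕ) (B : Set X) (t : List ℕ) : Prop :=
  ∃ j ≤ n, (B ∩ Ct t j).Nonempty ∧ B ∩ Et t j = ∅

open Classical in
noncomputable def fullStep (Ct Et : List ℕ → ℕ → Set X) (n : ℕ) (B : Set X)
    (t : List ℕ) : List ℕ :=
  if hh : ∃ k, k ≤ n ∧ fullQ Ct Et n B (t ++ [k]) then t ++ [Nat.find hh] else t

noncomputable def fullSel (Ct Et : List ℕ → ℕ → Set X) (n : ℕ) (B : Set X) : List ℕ :=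
  (fullStep Ct Et n B)^[n] []

variable {Ct Et : List ℕ → ℕ → Set X} {n : ℕ} {B : Set X}

lemma fullStep_prefix (t : List ℕ) : t <+: fullStep Ct Et n B t := by
  unfold fullStep
  split
  · exact List.prefix_append _ _
  · exact List.prefix_refl _

lemma fullIter_prefix {a b : ℕ} (hab : a ≤ b) :
    (fullStep Ct Et n B)^[a] [] <+: (fullStep Ct Et n B)^[b] [] := by
  induction b, hab using Nat.le_induction with
  | base => exact List.prefix_refl _
  | succ b hab ih =>
    rw [Function.iterate_succ_apply']
    exact ih.trans (fullStep_prefix _)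

lemma fullStep_mem_le {t : List ℕ} (ht : ∀ k ∈ t, k ≤ n) :
    ∀ k ∈ fullStep Ct Et n B t, k ≤ n := by
  classical
  unfold fullStep
  split
  · next hh =>
    intro k hk
    rcases List.mem_append.mp hk with hk | hk
    · exact ht k hk
    · rw [List.mem_singleton] at hk
      subst hk
      exact (Nat.find_spec hh).1
  · exact ht

lemma fullIter_mem_le (l : ℕ) : ∀ k ∈ (fullStep Ct Et n B)^[l] [], k ≤ n := by
  induction l with
  | zero => intro k hk; simp at hk
  | succ l ih =>
    rw [Function.iterate_succ_apply']
    exact fullStep_mem_le ih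

lemma fullIter_Q (l : ℕ) :
    (fullStep Ct Et n B)^[l] [] = [] ∨ fullQ Ct Et n B ((fullStep Ct Et n B)^[l] []) := by
  classical
  induction l with
  | zero => left; rfl
  | succ l ih =>
    rw [Function.iterate_succ_apply']
    rcases ih with ih | ih
    · rw [ih]
      unfold fullStep
      split
      · next hh => exact Or.inr (Nat.find_spec hh).2
      · exact Or.inl rfl
    · unfold fullStep
      split
      · next hh => exact Or.inr (Nat.find_spec hh).2
      · exact Or.inr ih

lemma list_getLastD_concat (l : List ℕ) (a d : ℕ) :
    (l ++ [a]).getLastD d = a := by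
  rw [List.getLastD_eq_getLast?, List.getLast?_concat]
  rfl

end Sel

theorem forward_aux {X Y : Type*} [MetricSpace X] [MetricSpace Y]
    [TopologicalSpace.SeparableSpace Y]
    (hultra : ∀ x y z : X, dist x z ≤ max (dist x y) (dist y z))
    (f : X → Y) (h : ∀ U : Set Y, IsOpen U → IsFsigma (f ⁻¹' U)) :
    ∃ g : ℕ → X → Y, (∀ n, IsFullFun (g n)) ∧
      ∀ x, Tendsto (fun n => g n x) atTop (𝓝 (f x)) := by
  classical
  rcases isEmpty_or_nonempty X with hX | hX
  · refine ⟨fun _ => f, fun n => ⟨?_, ?_⟩, fun x => (hX.false x).elim⟩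
    · rw [Set.range_eq_empty]; exact finite_empty
    · intro y hy; rw [Set.range_eq_empty] at hy; exact absurd hy (notMem_empty y)
  haveI : Nonempty Y := ⟨f (Classical.arbitrary X)⟩
  obtain ⟨u, hu⟩ := TopologicalSpace.exists_dense_seq Y
  set ε : ℕ → ℝ := fun m => (1/2)^m with hεdef
  have hεpos : ∀ m, 0 < ε m := fun m => by positivity
  have hεanti : ∀ {a b : ℕ}, a ≤ b → ε b ≤ ε a :=
    fun {a b} hab => pow_le_pow_of_le_one (by norm_num) (by norm_num) hab
  choose C hCcl hCun using fun m k => h (Metric.ball (u k) (ε m / 4)) Metric.isOpen_ball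
  set e : ℕ ≃ ℕ × ℕ := (Denumerable.eqv (ℕ × ℕ)).symm with he
  set G : ℕ → ℕ → Set X := fun m i => C m (e i).1 (e i).2 with hG
  have hGcl : ∀ m i, IsClosed (G m i) := fun m i => hCcl m (e i).1 (e i).2
  have hGS : ∀ m i, G m i ⊆ f ⁻¹' (Metric.ball (u (e i).1) (ε m / 4)) := by
    intro m i
    rw [hCun m (e i).1]
    exact subset_iUnion (C m (e i).1) (e i).2
  have hGcov : ∀ m x, ∃ i, x ∈ G m i := by
    intro m x
    obtain ⟨k, hk⟩ := hu.exists_dist_lt (f x) (by positivity : (0:ℝ) < ε m / 4)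
    have hx : x ∈ f ⁻¹' (Metric.ball (u k) (ε m / 4)) := by
      simpa [Metric.mem_ball] using hk
    rw [hCun m k] at hx
    obtain ⟨j, hj⟩ := mem_iUnion.mp hx
    refine ⟨e.symm (k, j), ?_⟩
    show x ∈ C m (e (e.symm (k, j))).1 (e (e.symm (k, j))).2
    rw [Equiv.apply_symm_apply]
    exact hj
  set idx : ℕ → X → ℕ := fun m x => Nat.find (hGcov m x) with hidxdef
  set κ : ℕ → X → ℕ := fun m x => (e (idx m x)).1 with hκdef
  have hidx_mem : ∀ m x, x ∈ G m (idx m x) := fun m x => Nat.find_spec (hGcov m x)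
  have hidx_min : ∀ m x i, i < idx m x → x ∉ G m i := fun m x i hi => Nat.find_min _ hi
  have hidx_eq : ∀ m x i, x ∈ G m i → (∀ i' < i, x ∉ G m i') → idx m x = i := by
    intro m x i hxi hmin
    refine le_antisymm (Nat.find_le hxi) (not_lt.mp fun hlt => hmin _ hlt (hidx_mem m x))
  set D : ℕ → ℕ → Set X := fun m k => {x | κ m x = k} with hDdef
  have hDS : ∀ m k x, x ∈ D m k → dist (f x) (u k) < ε m / 4 := by
    intro m k x hx
    have h1 := hGS m (idx m x) (hidx_mem m x)
    simp only [mem_preimage, Metric.mem_ball] at h1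
    rwa [show (e (idx m x)).1 = k from hx] at h1
  set Oo : ℕ → ℕ → Set X := fun m i => (⋃ i' ∈ Finset.range i, G m i')ᶜ with hOodef
  have hOo_open : ∀ m i, IsOpen (Oo m i) :=
    fun m i => (Finset.range i).finite_toSet.isClosed_biUnion
      (fun i' _ => hGcl m i') |>.isOpen_compl
  have hOo_mem : ∀ m i x, x ∈ Oo m i ↔ ∀ i' < i, x ∉ G m i' := by
    intro m i x
    simp [hOodef]
  have hD_iff : ∀ m k x, x ∈ D m k ↔
      ∃ i, (e i).1 = k ∧ x ∈ G m i ∧ x ∈ Oo m i := by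
    intro m k x
    constructor
    · intro hx
      exact ⟨idx m x, hx, hidx_mem m x, (hOo_mem m _ x).mpr (hidx_min m x)⟩
    · rintro ⟨i, hik, hxG, hxO⟩
      have : idx m x = i := hidx_eq m x i hxG ((hOo_mem m i x).mp hxO)
      show κ m x = k
      rw [hκdef]
      simp only
      rw [this, hik]
  have hD_eq : ∀ m k, D m k = ⋃ i, (if (e i).1 = k then G m i else ∅) ∩ Oo m i := by
    intro m k
    ext x
    rw [mem_iUnion]
    rw [hD_iff m k x]
    constructor
    · rintro ⟨i, hik, hxG, hxO⟩
      exact ⟨i, by rw [if_pos hik]; exact ⟨hxG, hxO⟩⟩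
    · rintro ⟨i, hx⟩
      by_cases hik : (e i).1 = k
      · rw [if_pos hik] at hx
        exact ⟨i, hik, hx.1, hx.2⟩
      · rw [if_neg hik] at hx
        exact absurd hx.1 (notMem_empty x)
  have hDc_eq : ∀ m k, (D m k)ᶜ = ⋃ i, (if (e i).1 ≠ k then G m i else ∅) ∩ Oo m i := by
    intro m k
    ext x
    rw [mem_compl_iff, mem_iUnion]
    constructor
    · intro hx
      refine ⟨idx m x, ?_⟩
      have hik : (e (idx m x)).1 ≠ k := fun hc => hx hc
      rw [if_pos hik]
      exact ⟨hidx_mem m x, (hOo_mem m _ x).mpr (hidx_min m x)⟩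
    · rintro ⟨i, hx⟩
      by_cases hik : (e i).1 ≠ k
      · rw [if_pos hik] at hx
        have : idx m x = i := hidx_eq m x i hx.1 ((hOo_mem m i x).mp hx.2)
        intro hc
        exact hik (by rw [← this]; exact hc)
      · rw [if_neg hik] at hx
        exact absurd hx.1 (notMem_empty x)
  have hK1cl : ∀ m k i, IsClosed (if (e i).1 = k then G m i else ∅) := by
    intro m k i
    split
    · exact hGcl m i
    · exact isClosed_empty
  have hK2cl : ∀ m k i, IsClosed (if (e i).1 ≠ k then G m i else ∅) := by
    intro m k i
    split
    · exact hGcl m i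
    · exact isClosed_empty
  choose F1 hF1cl hF1mono hF1un using
    fun m k => fsigma_structured (D m k) _ _ (hK1cl m k) (fun i => hOo_open m i) (hD_eq m k)
  choose F2 hF2cl hF2mono hF2un using
    fun m k => fsigma_structured ((D m k)ᶜ) _ _ (hK2cl m k) (fun i => hOo_open m i) (hDc_eq m k)
  have hF1sub : ∀ m k j, F1 m k j ⊆ D m k := by
    intro m k j
    rw [← hF1un m k]
    exact subset_iUnion (F1 m k) j
  have hF2sub : ∀ m k j, F2 m k j ⊆ (D m k)ᶜ := by
    intro m k j
    rw [← hF2un m k]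
    exact subset_iUnion (F2 m k) j
  -- nodes of the tree
  set Dt : List ℕ → Set X := fun t => {x | ∀ i < t.length, κ i x = t.getD i 0} with hDtdef
  set Ct : List ℕ → ℕ → Set X :=
    fun t j => ⋂ i ∈ Finset.range t.length, F1 i (t.getD i 0) j with hCtdef
  set Et : List ℕ → ℕ → Set X :=
    fun t j => ⋃ i ∈ Finset.range t.length, F2 i (t.getD i 0) j with hEtdef
  have hCt_cl : ∀ t j, IsClosed (Ct t j) :=
    fun t j => isClosed_biInter fun i _ => hF1cl i _ j
  have hEt_cl : ∀ t j, IsClosed (Et t j) :=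
    fun t j => (Finset.range t.length).finite_toSet.isClosed_biUnion fun i _ => hF2cl i _ j
  have hCt_mem : ∀ t j x, x ∈ Ct t j ↔ ∀ i < t.length, x ∈ F1 i (t.getD i 0) j := by
    intro t j x
    simp [hCtdef, mem_iInter]
  have hEt_mem : ∀ t j x, x ∈ Et t j ↔ ∃ i < t.length, x ∈ F2 i (t.getD i 0) j := by
    intro t j x
    simp [hEtdef, mem_iUnion]
  have hEt_mono : ∀ t, Monotone (Et t) := by
    intro t a b hab x hx
    rw [hEt_mem] at hx ⊢
    obtain ⟨i, hi, hxi⟩ := hx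
    exact ⟨i, hi, hF2mono i _ hab hxi⟩
  have hCt_sub : ∀ t j, Ct t j ⊆ Dt t := by
    intro t j x hx
    rw [hCt_mem] at hx
    intro i hi
    exact hF1sub i _ j (hx i hi)
  have hDt_un : ∀ t x, x ∈ Dt t → ∃ j, x ∈ Ct t j := by
    intro t x hx
    have hch : ∀ i ∈ Finset.range t.length, ∃ j, x ∈ F1 i (t.getD i 0) j := by
      intro i hi
      rw [Finset.mem_range] at hi
      have : x ∈ D i (t.getD i 0) := hx i hi
      rw [← hF1un i (t.getD i 0)] at this
      exact mem_iUnion.mp this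
    choose! jj hjj using hch
    refine ⟨(Finset.range t.length).sup jj, ?_⟩
    rw [hCt_mem]
    intro i hi
    have hi' : i ∈ Finset.range t.length := Finset.mem_range.mpr hi
    exact hF1mono i _ (Finset.le_sup hi') (hjj i hi')
  have hEt_subc : ∀ t j, Et t j ⊆ (Dt t)ᶜ := by
    intro t j x hx
    rw [hEt_mem] at hx
    obtain ⟨i, hi, hxi⟩ := hx
    intro hxd
    exact hF2sub i _ j hxi (hxd i hi)
  have hDtc_un : ∀ t x, x ∉ Dt t → ∃ j, x ∈ Et t j := by
    intro t x hx
    have : ∃ i < t.length, κ i x ≠ t.getD i 0 := by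
      by_contra hc
      push_neg at hc
      exact hx hc
    obtain ⟨i, hi, hne⟩ := this
    have : x ∈ (D i (t.getD i 0))ᶜ := hne
    rw [← hF2un i (t.getD i 0)] at this
    obtain ⟨j, hj⟩ := mem_iUnion.mp this
    refine ⟨j, ?_⟩
    rw [hEt_mem]
    exact ⟨i, hi, hj⟩
  -- the sequence of full functions
  set B : ℕ → X → Set X := fun n x => Metric.ball x ((1/2:ℝ)^n) with hBdef
  have hrpos : ∀ n : ℕ, (0:ℝ) < (1/2)^n := fun n => by positivity
  have hrtend : Tendsto (fun n : ℕ => ((1:ℝ)/2)^n) atTop (𝓝 0) :=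
    tendsto_pow_atTop_nhds_zero_of_lt_one (by norm_num) (by norm_num)
  set g : ℕ → X → Y := fun n x => u ((fullSel Ct Et n (B n x)).getLastD 0) with hgdef
  have hginv : ∀ n x y, dist x y < (1/2:ℝ)^n → g n x = g n y := by
    intro n x y hxy
    have : B n x = B n y := ultra_ball_eq hultra hxy
    rw [hgdef]
    simp only
    rw [this]
  refine ⟨g, ?_, ?_⟩
  · -- fullness
    intro n
    constructor
    · apply Set.Finite.subset ((Set.finite_Iic n).image u)
      rintro y ⟨x, rfl⟩
      refine ⟨(fullSel Ct Et n (B n x)).getLastD 0, ?_, rfl⟩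
      rcases List.eq_nil_or_concat (fullSel Ct Et n (B n x)) with hnil | ⟨l, a, hla⟩
      · rw [hnil]
        simp [Set.mem_Iic]
      · rw [List.concat_eq_append] at hla
        rw [hla, list_getLastD_concat]
        have := fullIter_mem_le (Ct := Ct) (Et := Et) (n := n) (B := B n x) n a
        rw [show (fullStep Ct Et n (B n x))^[n] [] = fullSel Ct Et n (B n x) from rfl,
          hla] at this
        exact this (by simp)
    · intro y hy
      refine ⟨(1/2)^n, hrpos n, ?_⟩
      intro x hx z hz
      have hdist : dist x z < (1/2:ℝ)^n := by
        rw [dist_comm]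
        exact Metric.mem_ball.mp hz
      simp only [mem_preimage, mem_singleton_iff] at hx ⊢
      rw [← hginv n x z hdist]
      exact hx
  · -- convergence
    intro x
    set τ : ℕ → List ℕ := fun m => (List.range m).map (fun i => κ i x) with hτdef
    have hτlen : ∀ m, (τ m).length = m := by intro m; simp [hτdef]
    have hτget : ∀ m i, i < m → (τ m).getD i 0 = κ i x := by
      intro m i hi
      rw [hτdef]
      simp only
      rw [List.getD_eq_getElem?_getD, List.getElem?_map, List.getElem?_range hi]
      rfl
    have hτsucc : ∀ m, τ (m+1) = τ m ++ [κ m x] := by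
      intro m
      rw [hτdef]
      simp [List.range_succ]
    have hxDt : ∀ m, x ∈ Dt (τ m) := by
      intro m
      intro i hi
      rw [hτlen] at hi
      rw [hτget m i hi]
    have hQtrue : ∀ t, x ∈ Dt t → ∀ᶠ n in atTop, fullQ Ct Et n (B n x) t := by
      intro t hxt
      obtain ⟨j0, hj0⟩ := hDt_un t x hxt
      have hxE : x ∉ Et t j0 := fun hc => hEt_subc t j0 hc hxt
      obtain ⟨r0, hr0, hball0⟩ := Metric.isOpen_iff.mp (hEt_cl t j0).isOpen_compl x hxE
      filter_upwards [eventually_ge_atTop j0, hrtend.eventually (gt_mem_nhds hr0)]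
        with n hn1 hn2
      refine ⟨j0, hn1, ⟨x, Metric.mem_ball_self (hrpos n), hj0⟩, ?_⟩
      rw [eq_empty_iff_forall_notMem]
      rintro z ⟨hz1, hz2⟩
      exact hball0 (Metric.ball_subset_ball hn2.le hz1) hz2
    have hQfalse : ∀ t, x ∉ Dt t → ∀ᶠ n in atTop, ¬ fullQ Ct Et n (B n x) t := by
      intro t hxt
      obtain ⟨j1, hj1⟩ := hDtc_un t x hxt
      have hsmall : ∀ j ∈ Set.Iio j1, ∀ᶠ n in atTop, B n x ∩ Ct t j = ∅ := by
        intro j _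
        have hxC : x ∉ Ct t j := fun hc => hxt (hCt_sub t j hc)
        obtain ⟨rj, hrj, hballj⟩ := Metric.isOpen_iff.mp (hCt_cl t j).isOpen_compl x hxC
        filter_upwards [hrtend.eventually (gt_mem_nhds hrj)] with n hn
        rw [eq_empty_iff_forall_notMem]
        rintro z ⟨hz1, hz2⟩
        exact hballj (Metric.ball_subset_ball hn.le hz1) hz2
      filter_upwards [(Set.finite_Iio j1).eventually_all.mpr hsmall] with n hn
      rintro ⟨j, hjn, hne, hempty⟩
      rcases lt_or_ge j j1 with hj | hj
      · rw [hn j hj] at hne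
        exact hne.ne_empty rfl
      · rw [eq_empty_iff_forall_notMem] at hempty
        exact hempty x ⟨Metric.mem_ball_self (hrpos n), hEt_mono t hj hj1⟩
    have hstab : ∀ m, ∀ᶠ n in atTop, (fullStep Ct Et n (B n x))^[m] [] = τ m := by
      intro m
      induction m with
      | zero => exact Eventually.of_forall (fun n => by simp [hτdef])
      | succ m ih =>
        have hnotm : ∀ k ∈ Set.Iio (κ m x), x ∉ Dt (τ m ++ [k]) := by
          intro k hk hxd
          have hlen : (τ m ++ [k]).length = m + 1 := by
            rw [List.length_append, hτlen]
            rfl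
          have := hxd m (by omega)
          rw [List.getD_append_right _ _ _ _ (by rw [hτlen])] at this
          rw [hτlen] at this
          simp at this
          exact absurd this.symm (ne_of_lt hk)
        have hfalse : ∀ᶠ n in atTop, ∀ k ∈ Set.Iio (κ m x),
            ¬ fullQ Ct Et n (B n x) (τ m ++ [k]) :=
          (Set.finite_Iio _).eventually_all.mpr (fun k hk => hQfalse _ (hnotm k hk))
        have htrue : ∀ᶠ n in atTop, fullQ Ct Et n (B n x) (τ m ++ [κ m x]) := by
          have := hQtrue (τ (m+1)) (hxDt (m+1))
          rwa [hτsucc m] at this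
        filter_upwards [ih, htrue, hfalse, eventually_ge_atTop (κ m x)]
          with n hih htr hfal hκn
        rw [Function.iterate_succ_apply', hih]
        unfold fullStep
        have hh : ∃ k, k ≤ n ∧ fullQ Ct Et n (B n x) (τ m ++ [k]) := ⟨κ m x, hκn, htr⟩
        rw [dif_pos hh]
        have hfind : Nat.find hh = κ m x := by
          rw [Nat.find_eq_iff]
          exact ⟨⟨hκn, htr⟩, fun k hk hc => hfal k hk hc.2⟩
        rw [hfind, ← hτsucc m]
    -- conclude
    rw [Metric.tendsto_atTop]
    intro δ hδ
    obtain ⟨m, hm⟩ := exists_pow_lt_of_lt_one hδ (by norm_num : (1/2:ℝ) < 1)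
    have key : ∀ᶠ n in atTop, dist (g n x) (f x) < δ := by
      filter_upwards [hstab (m+1), eventually_ge_atTop (m+1)] with n hst hn
      set t : List ℕ := fullSel Ct Et n (B n x) with htdef
      have hpre : τ (m+1) <+: t := by
        rw [← hst]
        exact fullIter_prefix hn
      obtain ⟨s, hs⟩ := hpre
      have htlen : m + 1 ≤ t.length := by
        rw [← hs, List.length_append, hτlen]
        omega
      have htne : t ≠ [] := by
        intro hc
        rw [hc] at htlen
        simp at htlen
      have hQt : fullQ Ct Et n (B n x) t := by
        rcases fullIter_Q (Ct := Ct) (Et := Et) (n := n) (B := B n x) n with hc | hc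
        · exact absurd hc htne
        · exact hc
      obtain ⟨j, hjn, ⟨z, hzB, hzC⟩, -⟩ := hQt
      rw [hCt_mem] at hzC
      have hzD : ∀ i < t.length, κ i z = t.getD i 0 :=
        fun i hi => hF1sub i _ j (hzC i hi)
      obtain ⟨l, a, hla⟩ := (List.eq_nil_or_concat t).resolve_left htne
      rw [List.concat_eq_append] at hla
      have hLlen : t.length = l.length + 1 := by rw [hla]; simp
      have hgval : g n x = u a := by
        rw [hgdef]
        simp only
        rw [← htdef, hla, list_getLastD_concat]
      have hmL : m ≤ l.length := by omega
      -- z is in D (l.length) a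
      have hza : κ l.length z = a := by
        have := hzD l.length (by omega)
        rwa [hla, List.getD_append_right _ _ _ _ (le_refl _), Nat.sub_self] at this
      have hz1 : dist (f z) (u a) < ε l.length / 4 := hDS l.length a z hza
      -- z and x are both in D m (κ m x)
      have hzm : κ m z = κ m x := by
        have h1 := hzD m (by omega)
        have h2 : t.getD m 0 = (τ (m+1)).getD m 0 := by
          rw [← hs]
          rw [List.getD_append _ _ _ _ (by rw [hτlen]; omega)]
        rw [h2, hτget (m+1) m (by omega)] at h1
        exact h1
      have hz2 : dist (f z) (u (κ m x)) < ε m / 4 := hDS m (κ m x) z hzm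
      have hx2 : dist (f x) (u (κ m x)) < ε m / 4 := hDS m (κ m x) x rfl
      have hεL : ε l.length ≤ ε m := hεanti hmL
      calc dist (g n x) (f x) = dist (u a) (f x) := by rw [hgval]
        _ ≤ dist (u a) (f z) + dist (f z) (u (κ m x)) + dist (u (κ m x)) (f x) :=
            dist_triangle4 _ _ _ _
        _ < ε m / 4 + ε m / 4 + ε m / 4 := by
            rw [dist_comm (u a) (f z), dist_comm (u (κ m x)) (f x)]
            have := lt_of_lt_of_le hz1 (by linarith : ε l.length / 4 ≤ ε m / 4)
            linarith
        _ < δ := by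
            have : ε m < δ := by
              rw [hεdef]
              exact hm
            linarith
    obtain ⟨N, hN⟩ := eventually_atTop.mp key
    exact ⟨N, hN⟩


/-- Let `(X,d)` be an ultrametric space (with `d ≤ 1`) and `Y` a separable
metrizable space.  A function `f : X → Y` is of Baire class 1 (preimages of open
sets are `Σ⁰₂`) iff it is the pointwise limit of a sequence of full functions. -/
theorem baire_one_iff_pointwise_limit_of_full
    {X Y : Type*} [MetricSpace X] [TopologicalSpace Y]
    [TopologicalSpace.SeparableSpace Y] [TopologicalSpace.MetrizableSpace Y]
    (hultra : ∀ x y z : X, dist x z ≤ max (dist x y) (dist y z))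
    (hbdd : ∀ x y : X, dist x y ≤ 1)
    (f : X → Y) :
    (∀ U : Set Y, IsOpen U → IsFsigma (f ⁻¹' U)) ↔
      ∃ g : ℕ → X → Y, (∀ n, IsFullFun (g n)) ∧
        ∀ x, Tendsto (fun n => g n x) atTop (𝓝 (f x)) := by
  letI : MetricSpace Y := TopologicalSpace.metrizableSpaceMetric Y
  constructor
  · intro hb
    exact forward_aux hultra f hb
  · rintro ⟨g, h1, h2⟩ U hU
    exact baire_one_of_limit h1 h2 U hU
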